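/- arXiv:math/0411054 — 5 statements merged into one kernel-verified Lean document; each statement's English description precedes it below -/
import Mathlib

section
/- There is no matrix in GL(3,ℤ) (3×3 integer matrix with determinant ±1) whose norm (the sum of the absolute values of all nine entries) is at most 4 and whose characteristic polynomial is irreducible over ℚ and has three distinct real roots. -/
/-!
The characteristic polynomial of `A` is the monic cubic `X³ - tr A X² + σ₂ X - det A` with
constant term `∓1`. Three distinct real roots make its discriminant positive, and irreducibility
over `ℚ` rules out the roots `±1` (the only candidates for rational roots). These conditions are
polynomial in the entries, and the norm bound leaves 5641 integer matrices, on which the kernel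
checks that they never hold together.
-/

open Matrix Polynomial

/-- The norm of an integer matrix: the sum of the absolute values of all entries. -/
def matNorm (A : Matrix (Fin 3) (Fin 3) ℤ) : ℤ := ∑ i, ∑ j, |A i j|

/-- An integer polynomial has three distinct real roots. -/
def hasThreeDistinctRealRoots (p : Polynomial ℤ) : Prop :=
  ∃ x y z : ℝ, x ≠ y ∧ x ≠ z ∧ y ≠ z ∧
    (p.map (Int.castRingHom ℝ)).IsRoot x ∧
    (p.map (Int.castRingHom ℝ)).IsRoot y ∧
    (p.map (Int.castRingHom ℝ)).IsRoot z

theorem Polynomial.roots_eq_of_natDegree_eq_three {R : Type*} [CommRing R] [IsDomain R]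
    {p : R[X]} (hdeg : p.natDegree = 3) {x y z : R} (hxy : x ≠ y) (hxz : x ≠ z) (hyz : y ≠ z)
    (hx : p.IsRoot x) (hy : p.IsRoot y) (hz : p.IsRoot z) : p.roots = {x, y, z} := by
  have hp : p ≠ 0 := by rintro rfl; simp at hdeg
  refine (Multiset.eq_of_le_of_card_le ?_ ?_).symm
  · rw [Multiset.le_iff_subset (by simp [hxy, hxz, hyz])]
    intro w hw
    simp only [Multiset.insert_eq_cons, Multiset.mem_cons, Multiset.mem_singleton] at hw
    rcases hw with rfl | rfl | rfl <;> simpa [mem_roots hp]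
  · simpa [hdeg] using p.card_roots'

theorem Polynomial.eval_ne_zero_of_irreducible_map {R K : Type*} [CommRing R] [Field K]
    {φ : R →+* K} {p : R[X]} (hirr : Irreducible (p.map φ)) (hdeg : (p.map φ).natDegree ≠ 1)
    (x : R) : p.eval x ≠ 0 := fun h =>
  hirr.not_isRoot_of_natDegree_ne_one hdeg (x := φ x) (by rw [IsRoot, eval_map_apply, h, map_zero])

namespace Cubic

variable {R S : Type*}

def eval [Semiring R] (P : Cubic R) (x : R) : R := P.a * x ^ 3 + P.b * x ^ 2 + P.c * x + P.d

theorem eval_toPoly [Semiring R] (P : Cubic R) (x : R) : P.toPoly.eval x = P.eval x := by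
  simp [toPoly, eval]

theorem discr_map [CommRing R] [CommRing S] (φ : R →+* S) (P : Cubic R) :
    (P.map φ).discr = φ P.discr := by
  simp [discr, map, map_ofNat]

theorem discr_pos_of_isRoot {K : Type*} [Field K] [LinearOrder K] [IsStrictOrderedRing K]
    {P : Cubic K} (ha : P.a ≠ 0) {x y z : K} (hxy : x ≠ y) (hxz : x ≠ z) (hyz : y ≠ z)
    (hx : P.toPoly.IsRoot x) (hy : P.toPoly.IsRoot y) (hz : P.toPoly.IsRoot z) : 0 < P.discr := by
  have hroots : (P.map (RingHom.id K)).roots = {x, y, z} := by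
    rw [map_roots, Polynomial.map_id]
    exact roots_eq_of_natDegree_eq_three (natDegree_of_a_ne_zero ha) hxy hxz hyz hx hy hz
  rw [← RingHom.id_apply P.discr, discr_eq_prod_three_roots ha hroots]
  have := sub_ne_zero.mpr hxy
  have := sub_ne_zero.mpr hxz
  have := sub_ne_zero.mpr hyz
  positivity

end Cubic

def intsWithNatAbsLE (r : ℕ) : List ℤ := (List.range (2 * r + 1)).map fun k : ℕ => (k : ℤ) - r

theorem mem_intsWithNatAbsLE {a : ℤ} {r : ℕ} : a ∈ intsWithNatAbsLE r ↔ a.natAbs ≤ r := by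
  simp only [intsWithNatAbsLE, List.mem_map, List.mem_range]
  constructor
  · rintro ⟨k, hk, rfl⟩
    omega
  · intro h
    exact ⟨(a + r).toNat, by omega, by omega⟩

def boundedLists : ℕ → ℕ → List (List ℤ)
  | 0, _ => [[]]
  | n + 1, r => (intsWithNatAbsLE r).flatMap fun a => (boundedLists n (r - a.natAbs)).map (a :: ·)

theorem mem_boundedLists_of_sum_natAbs_le {l : List ℤ} {n r : ℕ} (hn : l.length = n)
    (hr : (l.map Int.natAbs).sum ≤ r) : l ∈ boundedLists n r := by
  induction l generalizing n r with
  | nil => subst hn; simp [boundedLists]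
  | cons a l ih =>
    subst hn
    simp only [List.map_cons, List.sum_cons] at hr
    simp only [List.length_cons, boundedLists, List.mem_flatMap, List.mem_map]
    exact ⟨a, mem_intsWithNatAbsLE.mpr (by omega), l, ih rfl (by omega), rfl⟩

/-- The characteristic polynomial of `!![a, b, c; d, e, f; g, h, i]`, with trace, principal
minors and determinant spelled out entrywise so that the kernel can evaluate it. -/
def charCubicOfList {R : Type*} [CommRing R] : List R → Cubic R
  | [a, b, c, d, e, f, g, h, i] => ⟨1, -(a + e + i), a * e - b * d + a * i - c * g + e * i - f * h,
      -(a * e * i - a * f * h - b * d * i + b * f * g + c * d * h - c * e * g)⟩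
  | _ => 0

set_option maxRecDepth 100000 in
theorem discr_nonpos_of_mem_boundedLists : ∀ P ∈ (boundedLists 9 4).map charCubicOfList,
    P.d ^ 2 = 1 → P.eval 1 ≠ 0 → P.eval (-1) ≠ 0 → P.discr ≤ 0 := by
  decide +kernel

namespace Matrix

variable {R : Type*}

def entries (A : Matrix (Fin 3) (Fin 3) R) : List R :=
  [A 0 0, A 0 1, A 0 2, A 1 0, A 1 1, A 1 2, A 2 0, A 2 1, A 2 2]

theorem toPoly_charCubicOfList_entries [CommRing R] (A : Matrix (Fin 3) (Fin 3) R) :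
    (charCubicOfList A.entries).toPoly = A.charpoly := by
  simp only [charCubicOfList, entries, Cubic.toPoly, charpoly, det_fin_three, charmatrix_apply_eq,
    charmatrix_apply_ne, ne_eq, Fin.reduceEq, not_false_eq_true, map_one, map_add, map_neg, map_sub,
    map_mul]
  ring

theorem d_charCubicOfList_entries [CommRing R] (A : Matrix (Fin 3) (Fin 3) R) :
    (charCubicOfList A.entries).d = -A.det := by
  rw [det_fin_three]; rfl

theorem entries_mem_boundedLists (A : Matrix (Fin 3) (Fin 3) ℤ) {r : ℕ} (hA : matNorm A ≤ r) :
    A.entries ∈ boundedLists 9 r := by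
  refine mem_boundedLists_of_sum_natAbs_le rfl ?_
  simp only [matNorm, Fin.sum_univ_three] at hA
  rw [← Nat.cast_le (α := ℤ)]
  simp only [entries, List.map_cons, List.map_nil, List.sum_cons, List.sum_nil, Nat.cast_add,
    Int.natCast_natAbs, Nat.cast_zero]
  linarith

end Matrix

theorem no_hyperbolic_matrix_of_norm_le_four :
    ¬ ∃ A : Matrix (Fin 3) (Fin 3) ℤ,
      (A.det = 1 ∨ A.det = -1) ∧
      matNorm A ≤ 4 ∧
      Irreducible (A.charpoly.map (Int.castRingHom ℚ)) ∧
      hasThreeDistinctRealRoots A.charpoly := by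
  rintro ⟨A, hdet, hnorm, hirr, x, y, z, hxy, hxz, hyz, hx, hy, hz⟩
  set P := charCubicOfList A.entries
  have hP : P.toPoly = A.charpoly := A.toPoly_charCubicOfList_entries
  have hunit : P.d ^ 2 = 1 := by
    rw [A.d_charCubicOfList_entries]
    rcases hdet with h | h <;> simp [h]
  have hdeg : (A.charpoly.map (Int.castRingHom ℚ)).natDegree ≠ 1 := by
    simp [A.charpoly_monic.natDegree_map, charpoly_natDegree_eq_dim]
  have hroot (t : ℤ) : P.eval t ≠ 0 := by
    rw [← Cubic.eval_toPoly, hP]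
    exact eval_ne_zero_of_irreducible_map hirr hdeg t
  have hdiscr : 0 < P.discr := by
    rw [← hP, ← Cubic.map_toPoly] at hx hy hz
    have ha : (P.map (Int.castRingHom ℝ)).a ≠ 0 := by
      change Int.castRingHom ℝ 1 ≠ 0
      simp
    have := Cubic.discr_pos_of_isRoot ha hxy hxz hyz hx hy hz
    rwa [Cubic.discr_map, eq_intCast, Int.cast_pos] at this
  have hmem : P ∈ (boundedLists 9 4).map charCubicOfList :=
    List.mem_map_of_mem (A.entries_mem_boundedLists (by exact_mod_cast hnorm))
  exact (discr_nonpos_of_mem_boundedLists P hmem hunit (hroot 1) (hroot (-1))).not_gt hdiscr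
end

section
/- The matrix X with rows (−1,−1,−2), (0,0,−1), (1,0,−1) has determinant 1, and for every integer t ≥ 0 the identity (I − A_t)·X·M_t = X holds, where A_t has rows (0,1,0), (0,0,1), (1,1+t,−t−2) and M_t has rows (0,0,1), (1,0,−t−5), (0,1,t+6); equivalently, M_t = X⁻¹ (I − A_t)⁻¹ X, so M_t is conjugate in SL(3,ℤ) to (I − A_t)⁻¹. -/
open Matrix

/-- The matrix `A_t` with rows (0,1,0), (0,0,1), (1,1+t,−t−2). -/
def Amat (t : ℤ) : Matrix (Fin 3) (Fin 3) ℤ :=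
  !![0, 1, 0; 0, 0, 1; 1, 1 + t, -t - 2]

/-- The matrix `M_t` with rows (0,0,1), (1,0,−t−5), (0,1,t+6). -/
def Mmat (t : ℤ) : Matrix (Fin 3) (Fin 3) ℤ :=
  !![0, 0, 1; 1, 0, -t - 5; 0, 1, t + 6]

/-- The conjugating matrix `X` with rows (−1,−1,−2), (0,0,−1), (1,0,−1). -/
def Xmat : Matrix (Fin 3) (Fin 3) ℤ :=
  !![-1, -1, -2; 0, 0, -1; 1, 0, -1]

theorem X_conjugates_inv_one_sub_A_to_M :
    Xmat.det = 1 ∧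
    ∀ t : ℤ, 0 ≤ t →
      ((1 : Matrix (Fin 3) (Fin 3) ℤ) - Amat t) * Xmat * Mmat t = Xmat := by
  constructor
  · simp [Xmat, Matrix.det_fin_three, Matrix.vecHead, Matrix.vecTail]
  · intro t _
    simp only [Amat, Mmat, Xmat, Matrix.one_fin_three]
    ext i j
    fin_cases i <;> fin_cases j <;>
      simp [Matrix.mul_apply, Fin.sum_univ_succ, Matrix.vecHead, Matrix.vecTail] <;> ring
end

section
/- The characteristic polynomial of the 3×3 integer matrix with rows (1,1,1), (1,−1,0), (1,0,0) equals X³ − 3X − 1; it is irreducible over ℚ and has three distinct real roots. -/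
/-!
The characteristic polynomial `X³ - 3X - 1` is a monic cubic, so it is irreducible over `ℚ` as
soon as it has no rational root; by the rational root theorem such a root would be an integer `n`
with `n (n² - 3) = 1`, forcing `n = ±1`, which are not roots. The signs `-3, 1, -1, 1` of the
polynomial at `-2, -1, 0, 2` give a real root in each of the three gaps by the intermediate value
theorem.
-/

open Matrix Polynomial

namespace Polynomial

theorem irreducible_map_rat_of_monic_of_forall_not_isRoot_int {p : ℤ[X]} (hp : p.Monic)
    (hp2 : 2 ≤ p.natDegree) (hp3 : p.natDegree ≤ 3) (hroot : ∀ n : ℤ, ¬ p.IsRoot n) :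
    Irreducible (p.map (Int.castRingHom ℚ)) := by
  have hdeg : (p.map (Int.castRingHom ℚ)).natDegree = p.natDegree := hp.natDegree_map _
  rw [irreducible_iff_roots_eq_zero_of_degree_le_three (hdeg ▸ hp2) (hdeg ▸ hp3),
    Multiset.eq_zero_iff_forall_notMem]
  intro r hr
  have haeval : aeval r p = 0 := by
    rw [mem_roots (hp.map _).ne_zero, IsRoot] at hr
    rwa [aeval_def, eval₂_eq_eval_map]
  obtain ⟨n, rfl⟩ := isInteger_of_is_root_of_monic hp haeval
  rw [aeval_algebraMap_apply_eq_algebraMap_eval] at haeval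
  exact hroot n ((algebraMap ℤ ℚ).injective_int (haeval.trans (map_zero _).symm))

theorem exists_isRoot_mem_Ioo_of_sign_change {p : ℝ[X]} {a b : ℝ} (hab : a < b)
    (hsign : p.eval a < 0 ∧ 0 < p.eval b ∨ 0 < p.eval a ∧ p.eval b < 0) :
    ∃ x ∈ Set.Ioo a b, p.IsRoot x := by
  have hcont : ContinuousOn (fun x => p.eval x) (Set.Icc a b) := p.continuousOn
  rcases hsign with ⟨ha, hb⟩ | ⟨ha, hb⟩
  · exact intermediate_value_Ioo hab.le hcont ⟨ha, hb⟩
  · exact intermediate_value_Ioo' hab.le hcont ⟨hb, ha⟩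

theorem exists_three_distinct_isRoot_of_alternating_signs {p : ℝ[X]} {a b c d : ℝ}
    (hab : a < b) (hbc : b < c) (hcd : c < d)
    (ha : p.eval a < 0) (hb : 0 < p.eval b) (hc : p.eval c < 0) (hd : 0 < p.eval d) :
    ∃ x y z : ℝ, x ≠ y ∧ x ≠ z ∧ y ≠ z ∧ p.IsRoot x ∧ p.IsRoot y ∧ p.IsRoot z := by
  obtain ⟨x, hx, hpx⟩ := exists_isRoot_mem_Ioo_of_sign_change hab (.inl ⟨ha, hb⟩)
  obtain ⟨y, hy, hpy⟩ := exists_isRoot_mem_Ioo_of_sign_change hbc (.inr ⟨hb, hc⟩)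
  obtain ⟨z, hz, hpz⟩ := exists_isRoot_mem_Ioo_of_sign_change hcd (.inl ⟨hc, hd⟩)
  have hxy : x < y := hx.2.trans hy.1
  have hyz : y < z := hy.2.trans hz.1
  exact ⟨x, y, z, hxy.ne, (hxy.trans hyz).ne, hyz.ne, hpx, hpy, hpz⟩

end Polynomial

theorem charpoly_second_davenport_matrix :
    (!![1, 1, 1; 1, -1, 0; 1, 0, 0] : Matrix (Fin 3) (Fin 3) ℤ).charpoly = X ^ 3 - 3 * X - 1 := by
  rw [Matrix.charpoly, Matrix.det_fin_three]
  simp only [Int.reduceNeg, Fin.isValue, charmatrix_apply_eq, charmatrix_apply_ne, of_apply,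
    cons_val', cons_val_zero, cons_val_one, cons_val, cons_val_fin_one, eq_intCast, Int.cast_one,
    Int.cast_neg, Int.cast_zero, ne_eq, Fin.reduceEq, not_false_eq_true]
  ring

theorem not_isRoot_int_X_pow_three_sub_three_mul_X_sub_one (n : ℤ) :
    ¬ (X ^ 3 - 3 * X - 1 : ℤ[X]).IsRoot n := by
  intro hn
  have hroot : n ^ 3 - 3 * n - 1 = 0 := by simpa using hn
  have hunit : IsUnit n := .of_mul_eq_one (n ^ 2 - 3) (by linear_combination hroot)
  rcases Int.isUnit_iff.mp hunit with rfl | rfl <;> norm_num at hroot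

theorem irreducible_map_rat_X_pow_three_sub_three_mul_X_sub_one :
    Irreducible ((X ^ 3 - 3 * X - 1 : ℤ[X]).map (Int.castRingHom ℚ)) := by
  have hdeg : (X ^ 3 - 3 * X - 1 : ℤ[X]).natDegree = 3 := by compute_degree!
  exact irreducible_map_rat_of_monic_of_forall_not_isRoot_int (by monicity!) (by omega) hdeg.le
    not_isRoot_int_X_pow_three_sub_three_mul_X_sub_one

theorem hasThreeDistinctRealRoots_X_pow_three_sub_three_mul_X_sub_one :
    hasThreeDistinctRealRoots (X ^ 3 - 3 * X - 1 : ℤ[X]) := by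
  have hmap : (X ^ 3 - 3 * X - 1 : ℤ[X]).map (Int.castRingHom ℝ) = X ^ 3 - 3 * X - 1 := by simp
  rw [hasThreeDistinctRealRoots, hmap]
  refine exists_three_distinct_isRoot_of_alternating_signs (a := -2) (b := -1) (c := 0) (d := 2)
    ?_ ?_ ?_ ?_ ?_ ?_ ?_ <;> norm_num

theorem charpoly_second_davenport :
    (!![1, 1, 1; 1, -1, 0; 1, 0, 0] : Matrix (Fin 3) (Fin 3) ℤ).charpoly = X ^ 3 - 3 * X - 1 ∧
    Irreducible (((!![1, 1, 1; 1, -1, 0; 1, 0, 0] : Matrix (Fin 3) (Fin 3) ℤ).charpoly).map (Int.castRingHom ℚ)) ∧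
    hasThreeDistinctRealRoots (!![1, 1, 1; 1, -1, 0; 1, 0, 0] : Matrix (Fin 3) (Fin 3) ℤ).charpoly := by
  rw [charpoly_second_davenport_matrix]
  exact ⟨rfl, irreducible_map_rat_X_pow_three_sub_three_mul_X_sub_one,
    hasThreeDistinctRealRoots_X_pow_three_sub_three_mul_X_sub_one⟩
end

section
/- For every integer m ≥ 0, the characteristic polynomial of the 3×3 integer matrix with rows (0,0,1), (1,0,−m−5), (0,1,m+6) equals X³ − (m+6)X² + (m+5)X − 1; it is irreducible over ℚ and has three distinct positive real roots. -/
/-!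
The matrix is the companion matrix of `X³ - (m+6)X² + (m+5)X - 1`. A rational root of this
monic integer cubic is an integer dividing the constant term, hence `±1`, and neither is a root;
a cubic without rational roots is irreducible over `ℚ`. The values `-1`, `(2m+1)/8`, `-1` and
`(m+5)(m+6) - 1` at `0 < 1/2 < 1 < m+6` alternate in sign, so the intermediate value theorem
gives three distinct positive roots.
-/

open Matrix Polynomial

/-- An integer polynomial has three distinct positive real roots. -/
def hasThreeDistinctPositiveRealRoots (p : Polynomial ℤ) : Prop :=
  ∃ x y z : ℝ, x ≠ y ∧ x ≠ z ∧ y ≠ z ∧ 0 < x ∧ 0 < y ∧ 0 < z ∧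
    (p.map (Int.castRingHom ℝ)).IsRoot x ∧
    (p.map (Int.castRingHom ℝ)).IsRoot y ∧
    (p.map (Int.castRingHom ℝ)).IsRoot z

theorem Matrix.charpoly_fin_three_companion {R : Type*} [CommRing R] (a b c : R) :
    (!![0, 0, c; 1, 0, b; 0, 1, a] : Matrix (Fin 3) (Fin 3) R).charpoly
      = X ^ 3 - C a * X ^ 2 - C b * X - C c := by
  rw [Matrix.charpoly, Matrix.det_fin_three]
  simp only [charmatrix_apply_eq, charmatrix_apply_ne, of_apply, cons_val', cons_val_zero,
    cons_val_one, cons_val, cons_val_fin_one, ne_eq, Fin.reduceEq, not_false_eq_true, map_zero,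
    map_one, sub_zero, neg_zero, neg_neg, mul_neg, neg_mul, mul_one, zero_mul, mul_zero, add_zero]
  ring

theorem Polynomial.Monic.irreducible_map_rat_of_forall_eval_ne_zero {p : ℤ[X]} (hp : p.Monic)
    (h2 : 2 ≤ p.natDegree) (h3 : p.natDegree ≤ 3) (hroots : ∀ n : ℤ, p.eval n ≠ 0) :
    Irreducible (p.map (Int.castRingHom ℚ)) := by
  have hdeg : (p.map (Int.castRingHom ℚ)).natDegree = p.natDegree := hp.natDegree_map _
  rw [(hp.map _).irreducible_iff_roots_eq_zero_of_degree_le_three (hdeg ▸ h2) (hdeg ▸ h3),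
    Multiset.eq_zero_iff_forall_notMem]
  intro r hr
  have hroot : aeval r p = 0 := by
    rw [aeval_def, eval₂_eq_eval_map]
    exact (mem_roots (hp.map _).ne_zero).1 hr
  obtain ⟨n, rfl⟩ := isInteger_of_is_root_of_monic hp hroot
  rw [aeval_algebraMap_apply_eq_algebraMap_eval] at hroot
  exact hroots n (by simpa using hroot)

theorem korkina_cubic_ne_zero (m n : ℤ) : n ^ 3 - (m + 6) * n ^ 2 + (m + 5) * n - 1 ≠ 0 := by
  intro h
  have hunit : IsUnit n := .of_mul_eq_one (n ^ 2 - (m + 6) * n + (m + 5)) (by linear_combination h)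
  rcases Int.isUnit_iff.1 hunit with rfl | rfl <;> omega

theorem hasThreeDistinctPositiveRealRoots_of_sign_changes {p : ℤ[X]} {a b c : ℝ}
    (ha : 0 < a) (hab : a < b) (hbc : b < c)
    (hp0 : (p.map (Int.castRingHom ℝ)).eval 0 < 0)
    (hpa : 0 < (p.map (Int.castRingHom ℝ)).eval a)
    (hpb : (p.map (Int.castRingHom ℝ)).eval b < 0)
    (hpc : 0 < (p.map (Int.castRingHom ℝ)).eval c) :
    hasThreeDistinctPositiveRealRoots p := by
  set q := p.map (Int.castRingHom ℝ)
  obtain ⟨x, hx, hpx⟩ := intermediate_value_Ioo ha.le q.continuousOn ⟨hp0, hpa⟩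
  obtain ⟨y, hy, hpy⟩ := intermediate_value_Ioo' hab.le q.continuousOn ⟨hpb, hpa⟩
  obtain ⟨z, hz, hpz⟩ := intermediate_value_Ioo hbc.le q.continuousOn ⟨hpb, hpc⟩
  exact ⟨x, y, z, by linarith [hx.2, hy.1], by linarith [hx.2, hz.1], by linarith [hy.2, hz.1],
    hx.1, by linarith [hy.1], by linarith [hz.1], hpx, hpy, hpz⟩

theorem charpoly_korkina_sequence (m : ℤ) (hm : 0 ≤ m) :
    (!![0, 0, 1; 1, 0, -m - 5; 0, 1, m + 6] : Matrix (Fin 3) (Fin 3) ℤ).charpoly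
        = X ^ 3 - C (m + 6) * X ^ 2 + C (m + 5) * X - 1 ∧
    Irreducible
      (((!![0, 0, 1; 1, 0, -m - 5; 0, 1, m + 6] : Matrix (Fin 3) (Fin 3) ℤ).charpoly).map
        (Int.castRingHom ℚ)) ∧
    hasThreeDistinctPositiveRealRoots
      (!![0, 0, 1; 1, 0, -m - 5; 0, 1, m + 6] : Matrix (Fin 3) (Fin 3) ℤ).charpoly := by
  set M : Matrix (Fin 3) (Fin 3) ℤ := !![0, 0, 1; 1, 0, -m - 5; 0, 1, m + 6]
  have hcp : M.charpoly = X ^ 3 - C (m + 6) * X ^ 2 + C (m + 5) * X - 1 := by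
    rw [charpoly_fin_three_companion]
    simp only [map_sub, map_neg, map_add, map_one]
    ring
  refine ⟨hcp, ?_, ?_⟩
  · refine M.charpoly_monic.irreducible_map_rat_of_forall_eval_ne_zero
      (by simp [charpoly_natDegree_eq_dim]) (by simp [charpoly_natDegree_eq_dim]) fun n ↦ ?_
    simp [hcp, korkina_cubic_ne_zero]
  · have hm' : (0 : ℝ) ≤ m := by exact_mod_cast hm
    refine hasThreeDistinctPositiveRealRoots_of_sign_changes (a := 1 / 2) (b := 1) (c := m + 6)
      (by norm_num) (by norm_num) (by linarith) ?_ ?_ ?_ ?_ <;>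
    simp [hcp] <;> nlinarith
end

section
/- For all integers a ≥ 0 and b ≥ 0, the characteristic polynomial of the 3×3 integer matrix with rows (0,1,0), (0,0,1), (1,1+a−b,−(a+2)(b+1)) equals X³ + (a+2)(b+1)X² − (1+a−b)X − 1; it is irreducible over ℚ and has three distinct real roots. -/
open Matrix Polynomial

/-!
The matrix is a companion matrix, so its characteristic polynomial is the cubic
`X³ + c X² - d X - 1` with `c = (a + 2)(b + 1)`, `d = 1 + a - b`, and `a, b ≥ 0` gives
`d < c` and `c + d > 2`. A monic integer cubic is irreducible over `ℚ` as soon as it has no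
integer root, and an integer root divides the constant term `-1`; the values `c - d` at `1`
and `c + d - 2` at `-1` are nonzero. Three sign changes of the cubic on the real line give three
real roots by the intermediate value theorem.
-/

theorem Matrix.charpoly_companion_fin_three {R : Type*} [CommRing R] (p q r : R) :
    (!![0, 1, 0; 0, 0, 1; p, q, r] : Matrix (Fin 3) (Fin 3) R).charpoly
      = X ^ 3 - C r * X ^ 2 - C q * X - C p := by
  rw [charpoly, det_fin_three]
  simp
  ring

theorem Polynomial.irreducible_map_rat_of_natDegree_eq_three {p : ℤ[X]} (hm : p.Monic)
    (hdeg : p.natDegree = 3) (hunit : IsUnit (p.coeff 0))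
    (h1 : ¬ p.IsRoot 1) (hneg1 : ¬ p.IsRoot (-1)) :
    Irreducible (p.map (Int.castRingHom ℚ)) := by
  rw [← IsPrimitive.Int.irreducible_iff_irreducible_map_cast hm.isPrimitive,
    hm.irreducible_iff_roots_eq_zero_of_degree_le_three (by omega) hdeg.le,
    Multiset.eq_zero_iff_forall_notMem]
  intro r hr
  rw [mem_roots hm.ne_zero] at hr
  rcases Int.isUnit_iff.mp (isUnit_of_dvd_unit hr.dvd_coeff_zero hunit) with rfl | rfl
  exacts [h1 hr, hneg1 hr]

theorem exists_three_zeros_of_alternating_signs {f : ℝ → ℝ} (hf : Continuous f)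
    {x₀ x₁ x₂ x₃ : ℝ} (h₀₁ : x₀ ≤ x₁) (h₁₂ : x₁ ≤ x₂) (h₂₃ : x₂ ≤ x₃)
    (hf₀ : f x₀ < 0) (hf₁ : 0 < f x₁) (hf₂ : f x₂ < 0) (hf₃ : 0 < f x₃) :
    ∃ x y z, x < y ∧ y < z ∧ f x = 0 ∧ f y = 0 ∧ f z = 0 := by
  obtain ⟨x, hx, hfx⟩ := intermediate_value_Ioo h₀₁ hf.continuousOn ⟨hf₀, hf₁⟩
  obtain ⟨y, hy, hfy⟩ := intermediate_value_Ioo' h₁₂ hf.continuousOn ⟨hf₂, hf₁⟩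
  obtain ⟨z, hz, hfz⟩ := intermediate_value_Ioo h₂₃ hf.continuousOn ⟨hf₂, hf₃⟩
  exact ⟨x, y, z, hx.2.trans hy.1, hy.2.trans hz.1, hfx, hfy, hfz⟩

theorem natDegree_cubic (c d : ℤ) :
    (X ^ 3 + C c * X ^ 2 - C d * X - 1 : ℤ[X]).natDegree = 3 := by
  compute_degree!

theorem monic_cubic (c d : ℤ) : (X ^ 3 + C c * X ^ 2 - C d * X - 1 : ℤ[X]).Monic := by
  monicity!

theorem irreducible_map_rat_cubic {c d : ℤ} (h1 : c ≠ d) (h2 : c + d ≠ 2) :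
    Irreducible ((X ^ 3 + C c * X ^ 2 - C d * X - 1 : ℤ[X]).map (Int.castRingHom ℚ)) := by
  refine irreducible_map_rat_of_natDegree_eq_three (monic_cubic c d) (natDegree_cubic c d)
    (by simp) ?_ ?_ <;>
  · simp only [IsRoot, eval_sub, eval_add, eval_mul, eval_pow, eval_C, eval_X, eval_one]
    omega

-- The values at `-(c + 1), -1, 0, 1` are `d (c + 1) - (c + 1)² - 1, c + d - 2, -1, c - d`.
theorem hasThreeDistinctRealRoots_cubic {c d : ℤ} (h1 : d < c) (h2 : 2 < c + d) :
    hasThreeDistinctRealRoots (X ^ 3 + C c * X ^ 2 - C d * X - 1) := by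
  set f : ℝ → ℝ := fun t => t ^ 3 + c * t ^ 2 - d * t - 1
  have hc : (2 : ℝ) ≤ c := by exact_mod_cast (by omega : 2 ≤ c)
  have hdc : (d : ℝ) < c := by exact_mod_cast h1
  have hcd : (2 : ℝ) < c + d := by exact_mod_cast h2
  obtain ⟨x, y, z, hxy, hyz, hx, hy, hz⟩ := exists_three_zeros_of_alternating_signs
    (f := f) (by fun_prop) (x₀ := -(c + 1)) (x₁ := -1) (x₂ := 0) (x₃ := 1)
    (by linarith) (by norm_num) (by norm_num) (by simp [f]; nlinarith) (by simp [f]; linarith)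
    (by simp [f]) (by simp [f]; linarith)
  refine ⟨x, y, z, hxy.ne, (hxy.trans hyz).ne, hyz.ne, ?_, ?_, ?_⟩ <;> simpa [f]

theorem charpoly_two_parameter_family (a b : ℤ) (ha : 0 ≤ a) (hb : 0 ≤ b) :
    (!![0, 1, 0; 0, 0, 1; 1, 1 + a - b, -((a + 2) * (b + 1))] :
        Matrix (Fin 3) (Fin 3) ℤ).charpoly
      = X ^ 3 + C ((a + 2) * (b + 1)) * X ^ 2 - C (1 + a - b) * X - 1 ∧
    Irreducible
      (((!![0, 1, 0; 0, 0, 1; 1, 1 + a - b, -((a + 2) * (b + 1))] :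
          Matrix (Fin 3) (Fin 3) ℤ).charpoly).map (Int.castRingHom ℚ)) ∧
    hasThreeDistinctRealRoots
      (!![0, 1, 0; 0, 0, 1; 1, 1 + a - b, -((a + 2) * (b + 1))] :
        Matrix (Fin 3) (Fin 3) ℤ).charpoly := by
  have hcp : (!![0, 1, 0; 0, 0, 1; 1, 1 + a - b, -((a + 2) * (b + 1))] :
        Matrix (Fin 3) (Fin 3) ℤ).charpoly
      = X ^ 3 + C ((a + 2) * (b + 1)) * X ^ 2 - C (1 + a - b) * X - 1 := by
    rw [charpoly_companion_fin_three, C_neg, C_1]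
    ring
  have hlt : 1 + a - b < (a + 2) * (b + 1) := by nlinarith
  have hsum : 2 < (a + 2) * (b + 1) + (1 + a - b) := by nlinarith
  rw [hcp]
  exact ⟨rfl, irreducible_map_rat_cubic hlt.ne' hsum.ne', hasThreeDistinctRealRoots_cubic hlt hsum⟩
end
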